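/- arXiv:2403.13041 — 2 statements merged into one kernel-verified Lean document; each statement's English description precedes it below -/
import Mathlib

section
/- Let J = {i₁,…,i_B} consist of B indices sampled independently and uniformly from {1,…,n}, and let S, S′ be datasets with d₁₂(S,S′) ≤ τ. Then for any integer m with 1 ≤ m ≤ n−1, P(∑_{i∈J} ‖Sᵢ − Sᵢ′‖₂ ≤ Bτ/m) ≥ (1 − (m−1)/n)^B. -/
/-!
Call an index bad when `‖Sᵢ − Sᵢ′‖ > τ/m`. By Markov's inequality for counting measure, the total
budget `d₁₂(S,S′) ≤ τ` leaves room for at most `m − 1` bad indices, so at least `n − (m − 1)` indices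
are good. Every tuple of `B` good indices has total distance at most `B · τ/m`, and there are at
least `(n − (m − 1))^B` such tuples among the `n^B` tuples.
-/

open Finset

section

variable {ι K : Type*} [Semiring K] [LinearOrder K] [IsStrictOrderedRing K]

theorem Finset.card_filter_lt_lt_of_sum_le {s : Finset ι} {f : ι → K} {c : K} {m : ℕ}
    [DecidablePred (c < f ·)] (hf : ∀ i ∈ s, 0 ≤ f i) (hm : 0 < m)
    (hsum : ∑ i ∈ s, f i ≤ m * c) : #{i ∈ s | c < f i} < m := by
  set T := {i ∈ s | c < f i}
  rcases T.eq_empty_or_nonempty with hT | hT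
  · simpa [hT]
  have hc : 0 ≤ c :=
    nonneg_of_mul_nonneg_right ((sum_nonneg hf).trans hsum) (by exact_mod_cast hm)
  have hT_lt : #T * c < ∑ i ∈ T, f i := by
    simpa using sum_lt_sum_of_nonempty hT fun i hi => (mem_filter.1 hi).2
  have hT_le : ∑ i ∈ T, f i ≤ ∑ i ∈ s, f i :=
    sum_le_sum_of_subset_of_nonneg (filter_subset _ _) fun i hi _ => hf i hi
  exact_mod_cast lt_of_mul_lt_mul_right (hT_lt.trans_le (hT_le.trans hsum)) hc

theorem Finset.card_pow_le_card_filter_sum_le [Fintype ι] {A : Finset ι} {f : ι → K} {c : K}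
    (B : ℕ) [DecidablePred fun J : Fin B → ι => ∑ b, f (J b) ≤ B * c] (hA : ∀ i ∈ A, f i ≤ c) :
    #A ^ B ≤ #{J : Fin B → ι | ∑ b, f (J b) ≤ B * c} := by
  rw [← Fintype.card_piFinset_const]
  refine card_le_card fun J hJ => mem_filter.2 ⟨mem_univ J, ?_⟩
  simpa using (sum_le_sum fun b _ => hA (J b) (Fintype.mem_piFinset.1 hJ b) :
    ∑ b, f (J b) ≤ ∑ _b : Fin B, c)

end

open Classical in
theorem subsample_concentration_general {n d B : ℕ}
    (S S' : Fin n → EuclideanSpace ℝ (Fin d))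
    (τ : ℝ) (m : ℕ) (hm1 : 1 ≤ m) (hm2 : m ≤ n - 1)
    (hd12 : ∑ i, ‖S i - S' i‖ ≤ τ) :
    (1 - ((m : ℝ) - 1) / n) ^ B ≤
      ((Finset.univ.filter fun J : Fin B → Fin n =>
          (∑ b, ‖S (J b) - S' (J b)‖) ≤ B * τ / m).card : ℝ) / (n : ℝ) ^ B := by
  set good := univ.filter fun i => ‖S i - S' i‖ ≤ τ / m
  have hm : (m : ℝ) ≠ 0 := by positivity
  have hn : (n : ℝ) ≠ 0 := by exact_mod_cast (by omega : n ≠ 0)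
  have hbad : #{i | τ / m < ‖S i - S' i‖} < m :=
    card_filter_lt_lt_of_sum_le (fun _ _ => norm_nonneg _) hm1 (by rwa [mul_div_cancel₀ _ hm])
  have hgood : n + 1 ≤ #good + m := by
    have hsplit : #good + #{i | τ / m < ‖S i - S' i‖} = n := by
      simpa only [not_le, card_univ, Fintype.card_fin] using
        card_filter_add_card_filter_not (s := univ) fun i => ‖S i - S' i‖ ≤ τ / m
    omega
  have htuples :
      #good ^ B ≤ #{J : Fin B → Fin n | ∑ b, ‖S (J b) - S' (J b)‖ ≤ B * (τ / m)} :=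
    card_pow_le_card_filter_sum_le B fun i hi => (mem_filter.1 hi).2
  rw [le_div_iff₀ (by positivity), ← mul_pow, sub_mul, one_mul, div_mul_cancel₀ _ hn,
    mul_div_assoc]
  calc ((n : ℝ) - (m - 1)) ^ B ≤ (#good : ℝ) ^ B := by
        have hgood' : (n : ℝ) + 1 ≤ #good + m := by exact_mod_cast hgood
        have hmn : (m : ℝ) + 1 ≤ n := by exact_mod_cast (by omega : m + 1 ≤ n)
        gcongr <;> linarith
    _ ≤ _ := by exact_mod_cast htuples

open Classical in
/-- Let `J = (i₁,…,i_B)` consist of `B` indices sampled independently and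
uniformly (with replacement) from `{1,…,n}`, and let `S, S′` be datasets with
`d₁₂(S,S′) ≤ τ`. Then for any integer `m` with `1 ≤ m ≤ n−1`, the probability
(counting uniformly over all `n^B` index tuples) that
`∑_{i∈J} ‖Sᵢ − Sᵢ′‖₂ ≤ Bτ/m` is at least `(1 − (m−1)/n)^B`. -/
theorem subsample_concentration {n d B : ℕ} (hn : 0 < n)
    (S S' : Fin n → EuclideanSpace ℝ (Fin d))
    (τ : ℝ) (hτ : 0 < τ) (m : ℕ) (hm1 : 1 ≤ m) (hm2 : m ≤ n - 1)
    (hd12 : ∑ i, ‖S i - S' i‖ ≤ τ) :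
    (1 - ((m : ℝ) - 1) / n) ^ B ≤
      ((Finset.univ.filter fun J : Fin B → Fin n =>
          (∑ b, ‖S (J b) - S' (J b)‖) ≤ B * τ / m).card : ℝ) / (n : ℝ) ^ B :=
  subsample_concentration_general S S' τ m hm1 hm2 hd12
end

section
/- Covariance perturbation bound: let S = {x₁,…,xₙ} and S̃ = {x₁,…,x_{n−1}, xₙ′} be two datasets of points in the unit Euclidean ball of ℝ^d with empirical covariance matrices Σ and Σ̃ (computed about the respective empirical means). Then ‖Σ̃ − Σ‖_F ≤ 2(3n+2)/(n(n−1)). -/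
/-!
Writing `μ` for the empirical mean, `(n - 1) Σ = ∑ xᵢ xᵢᵀ - n μ μᵀ`. Replacing the point `a`
by `b` therefore changes `(n - 1) Σ` by `b bᵀ - a aᵀ - n (μ' μ'ᵀ - μ μᵀ)`, and
`μ' μ'ᵀ - μ μᵀ = μ' (μ' - μ)ᵀ + (μ' - μ) μᵀ` with `μ' - μ = (b - a) / n` of norm at most `2 / n`.
As `‖u vᵀ‖_F ≤ ‖u‖ ‖v‖` and all points and means lie in the unit ball, the change has
Frobenius norm at most `1 + 1 + n (2 / n + 2 / n) = 6`, so
`‖Σ̃ - Σ‖_F ≤ 6 / (n - 1) ≤ 2 (3n + 2) / (n (n - 1))`.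
-/

/-- Empirical covariance matrix of a dataset of `n` points in `ℝ^d`,
computed about the empirical mean, with normalization `1/(n−1)`. -/
noncomputable def empCov {n d : ℕ} (x : Fin n → EuclideanSpace ℝ (Fin d)) :
    Matrix (Fin d) (Fin d) ℝ :=
  fun j k =>
    (1 / ((n : ℝ) - 1)) *
      ∑ i, (x i j - (∑ l, x l j) / (n : ℝ)) * (x i k - (∑ l, x l k) / (n : ℝ))

open Matrix WithLp
open scoped Matrix.Norms.Frobenius

namespace Matrix

variable {m n : Type*} [Fintype m] [Fintype n]

theorem frobenius_norm_eq_sqrt (A : Matrix m n ℝ) : ‖A‖ = √(∑ i, ∑ j, A i j ^ 2) := by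
  simp only [frobenius_norm_def, Real.sqrt_eq_rpow, Real.rpow_two, Real.norm_eq_abs, sq_abs]

theorem frobenius_norm_vecMulVec_le {𝕜 : Type*} [RCLike 𝕜] (u : EuclideanSpace 𝕜 m)
    (v : EuclideanSpace 𝕜 n) : ‖vecMulVec u v‖ ≤ ‖u‖ * ‖v‖ := by
  rw [vecMulVec_eq (Fin 1), ← toLp_ofLp (p := 2) u, ← toLp_ofLp (p := 2) v,
    ← frobenius_norm_replicateCol (ι := Fin 1), ← frobenius_norm_replicateRow (ι := Fin 1)]
  exact frobenius_norm_mul _ _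

end Matrix

theorem Fintype.sum_sub_sum_eq_of_eq_of_ne {ι M : Type*} [Fintype ι] [AddCommGroup M]
    {f g : ι → M} (i₀ : ι) (h : ∀ i, i ≠ i₀ → f i = g i) :
    ∑ i, f i - ∑ i, g i = f i₀ - g i₀ := by
  rw [← Finset.sum_sub_distrib, Fintype.sum_eq_single i₀ fun i hi => by rw [h i hi, sub_self]]

theorem Fintype.sum_sub_mean_mul_sub_mean {ι : Type*} [Fintype ι] (f g : ι → ℝ) :
    ∑ i, (f i - (∑ l, f l) / card ι) * (g i - (∑ l, g l) / card ι) =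
      ∑ i, f i * g i - card ι * ((∑ l, f l) / card ι * ((∑ l, g l) / card ι)) := by
  rcases isEmpty_or_nonempty ι with _ | _
  · simp
  have : (card ι : ℝ) ≠ 0 := by positivity
  simp only [sub_mul, mul_sub, Finset.sum_sub_distrib, ← Finset.sum_mul, ← Finset.mul_sum,
    Finset.sum_const, Finset.card_univ, nsmul_eq_mul]
  field_simp
  ring

section EmpiricalMean

variable {n d : ℕ}

noncomputable def empMean (x : Fin n → EuclideanSpace ℝ (Fin d)) : EuclideanSpace ℝ (Fin d) :=
  (n : ℝ)⁻¹ • ∑ i, x i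

theorem empMean_apply (x : Fin n → EuclideanSpace ℝ (Fin d)) (j : Fin d) :
    empMean x j = (∑ i, x i j) / n := by
  simp [empMean, ofLp_sum, div_eq_inv_mul]

theorem norm_empMean_le {x : Fin n → EuclideanSpace ℝ (Fin d)} (hx : ∀ i, ‖x i‖ ≤ 1) :
    ‖empMean x‖ ≤ 1 := by
  have : ‖∑ i, x i‖ ≤ n := by
    simpa using norm_sum_le_of_le Finset.univ fun i _ => hx i
  rw [empMean, norm_smul, norm_inv, RCLike.norm_natCast]
  exact inv_mul_le_one_of_le₀ this (Nat.cast_nonneg n)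

theorem empMean_sub_empMean {x x' : Fin n → EuclideanSpace ℝ (Fin d)} (i₀ : Fin n)
    (h : ∀ i, i ≠ i₀ → x i = x' i) :
    empMean x' - empMean x = (n : ℝ)⁻¹ • (x' i₀ - x i₀) := by
  rw [empMean, empMean, ← smul_sub,
    Fintype.sum_sub_sum_eq_of_eq_of_ne i₀ fun i hi => (h i hi).symm]

theorem norm_empMean_sub_empMean_le {x x' : Fin n → EuclideanSpace ℝ (Fin d)} (i₀ : Fin n)
    (h : ∀ i, i ≠ i₀ → x i = x' i) (hx : ‖x i₀‖ ≤ 1) (hx' : ‖x' i₀‖ ≤ 1) :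
    ‖empMean x' - empMean x‖ ≤ 2 / n := by
  rw [empMean_sub_empMean i₀ h, norm_smul, norm_inv, RCLike.norm_natCast, inv_mul_eq_div]
  gcongr
  calc ‖x' i₀ - x i₀‖ ≤ ‖x' i₀‖ + ‖x i₀‖ := norm_sub_le _ _
    _ ≤ 2 := by linarith

end EmpiricalMean

section EmpiricalCovariance

variable {n d : ℕ}

theorem empCov_eq (x : Fin n → EuclideanSpace ℝ (Fin d)) :
    empCov x = (1 / ((n : ℝ) - 1)) •
      (∑ i, vecMulVec (x i) (x i) - (n : ℝ) • vecMulVec (empMean x) (empMean x)) := by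
  ext j k
  have := Fintype.sum_sub_mean_mul_sub_mean (fun i => x i j) (fun i => x i k)
  rw [Fintype.card_fin] at this
  simp only [empCov, this, Matrix.smul_apply, Matrix.sub_apply, Matrix.sum_apply,
    vecMulVec_apply, empMean_apply, smul_eq_mul]

theorem empCov_sub_empCov {x x' : Fin n → EuclideanSpace ℝ (Fin d)} (i₀ : Fin n)
    (h : ∀ i, i ≠ i₀ → x i = x' i) :
    empCov x' - empCov x = (1 / ((n : ℝ) - 1)) •
      (vecMulVec (x' i₀) (x' i₀) - vecMulVec (x i₀) (x i₀) -
        (n : ℝ) • (vecMulVec (empMean x') (empMean x' - empMean x) +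
          vecMulVec (empMean x' - empMean x) (empMean x))) := by
  have hsum := Fintype.sum_sub_sum_eq_of_eq_of_ne (f := fun i => vecMulVec (x' i) (x' i))
    (g := fun i => vecMulVec (x i) (x i)) i₀ fun i hi => by simp only [h i hi]
  rw [empCov_eq, empCov_eq, ← smul_sub, ofLp_sub, vecMulVec_sub, sub_vecMulVec, ← hsum]
  module

theorem norm_empCov_sub_empCov_le {x x' : Fin n → EuclideanSpace ℝ (Fin d)} (hn : 1 < n)
    (i₀ : Fin n) (h : ∀ i, i ≠ i₀ → x i = x' i)
    (hx : ∀ i, ‖x i‖ ≤ 1) (hx' : ∀ i, ‖x' i‖ ≤ 1) :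
    ‖empCov x' - empCov x‖ ≤ 6 / ((n : ℝ) - 1) := by
  have hn₀ : (0 : ℝ) < n := by positivity
  have hn₁ : (0 : ℝ) < n - 1 := by rw [sub_pos]; exact_mod_cast hn
  have ha := hx i₀
  have hb := hx' i₀
  have hμ := norm_empMean_le hx
  have hμ' := norm_empMean_le hx'
  have hδ := norm_empMean_sub_empMean_le i₀ h ha hb
  rw [empCov_sub_empCov i₀ h, norm_smul, Real.norm_of_nonneg (by positivity), one_div,
    inv_mul_le_iff₀ hn₁, mul_div_cancel₀ _ hn₁.ne']
  calc _ ≤ ‖vecMulVec (x' i₀) (x' i₀)‖ + ‖vecMulVec (x i₀) (x i₀)‖ +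
        n * (‖vecMulVec (empMean x') (empMean x' - empMean x)‖ +
          ‖vecMulVec (empMean x' - empMean x) (empMean x)‖) := by
        refine (norm_sub_le _ _).trans (add_le_add (norm_sub_le _ _) ?_)
        rw [norm_smul, RCLike.norm_natCast]
        gcongr
        exact norm_add_le _ _
    _ ≤ ‖x' i₀‖ * ‖x' i₀‖ + ‖x i₀‖ * ‖x i₀‖ +
        n * (‖empMean x'‖ * ‖empMean x' - empMean x‖ +
          ‖empMean x' - empMean x‖ * ‖empMean x‖) := by
        gcongr <;> exact frobenius_norm_vecMulVec_le _ _
    _ ≤ 1 * 1 + 1 * 1 + n * (1 * (2 / n) + 2 / n * 1) := by gcongr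
    _ = 6 := by field_simp; norm_num

end EmpiricalCovariance

/-- Covariance perturbation bound: if two datasets of size `n` in the unit
Euclidean ball of `ℝ^d` differ in a single point, their empirical covariance
matrices (each computed about its own empirical mean) satisfy
`‖Σ̃ − Σ‖_F ≤ 2(3n+2)/(n(n−1))`. -/
theorem cov_perturbation {n d : ℕ} (hn : 2 ≤ n)
    (x x' : Fin n → EuclideanSpace ℝ (Fin d)) (i₀ : Fin n)
    (hneighbor : ∀ i, i ≠ i₀ → x i = x' i)
    (hball : ∀ i, ‖x i‖ ≤ 1) (hball' : ∀ i, ‖x' i‖ ≤ 1) :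
    Real.sqrt (∑ j, ∑ k, (empCov x' j k - empCov x j k) ^ 2)
      ≤ 2 * (3 * (n : ℝ) + 2) / ((n : ℝ) * ((n : ℝ) - 1)) := by
  have hn₂ : (2 : ℝ) ≤ n := by exact_mod_cast hn
  calc _ = ‖empCov x' - empCov x‖ := (frobenius_norm_eq_sqrt _).symm
    _ ≤ 6 / ((n : ℝ) - 1) := norm_empCov_sub_empCov_le hn i₀ hneighbor hball hball'
    _ ≤ 2 * (3 * n + 2) / (n * (n - 1)) := by
        rw [div_le_div_iff₀ (by linarith) (by nlinarith)]
        nlinarith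
end
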